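/- In the bullet process, the survival probability function θ(v) — the probability that a bullet fired first with fixed velocity v survives forever against the i.i.d. sequence of subsequent bullets — is non-decreasing in v. -/

import Mathlib

open MeasureTheory ProbabilityTheory Filter Set

noncomputable section

namespace BulletProcess

/-- Firing time of bullet `i`: `t_i = Δ_1 + ⋯ + Δ_i` (the delay `Δ_0` plays no role). -/
def fireTime (Δ : ℕ → ℝ) (i : ℕ) : ℝ := ∑ j ∈ Finset.Icc 1 i, Δ j

/-- Virtual position of bullet `i` at time `t`. -/
def pos (v Δ : ℕ → ℝ) (i : ℕ) (t : ℝ) : ℝ := v i * (t - fireTime Δ i)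

/-- No three bullets are ever simultaneously at the same position. -/
def NoTriple (v Δ : ℕ → ℝ) : Prop :=
  ∀ t : ℝ, ∀ i j k : ℕ, i ≠ j → j ≠ k → i ≠ k →
    fireTime Δ i ≤ t → fireTime Δ j ≤ t → fireTime Δ k ≤ t →
    ¬(pos v Δ i t = pos v Δ j t ∧ pos v Δ j t = pos v Δ k t)

/-- A consistent annihilation structure for the bullet process on the bullets indexed by `I`:
`partner i = some j` means bullets `i` and `j` mutually annihilate (at time `deathTime i`),
`partner i = none` means bullet `i` survives forever.  The axioms say that matched pairs
really collide (the later bullet is faster and catches the earlier one at their common death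
time), and that two bullets that are both fired and still alive never occupy the same
position. -/
structure Dynamics (v Δ : ℕ → ℝ) (I : Set ℕ) where
  partner : ℕ → Option ℕ
  deathTime : ℕ → ℝ
  partner_mem : ∀ i j, i ∈ I → partner i = some j → j ∈ I
  partner_symm : ∀ i j, i ∈ I → j ∈ I → (partner i = some j ↔ partner j = some i)
  partner_ne : ∀ i, i ∈ I → partner i ≠ some i
  death_symm : ∀ i j, i ∈ I → partner i = some j → deathTime j = deathTime i
  collide : ∀ i j, i ∈ I → i < j → partner i = some j →
    v i < v j ∧ fireTime Δ j ≤ deathTime i ∧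
      pos v Δ i (deathTime i) = pos v Δ j (deathTime i)
  no_crossing : ∀ i j, i ∈ I → j ∈ I → i ≠ j → ∀ t : ℝ,
    fireTime Δ i ≤ t → fireTime Δ j ≤ t →
    (partner i = none ∨ t < deathTime i) →
    (partner j = none ∨ t < deathTime j) →
    pos v Δ i t ≠ pos v Δ j t

namespace Dynamics

variable {v Δ : ℕ → ℝ} {I : Set ℕ}

/-- Bullet `i` survives (is never annihilated). -/
def survives (d : Dynamics v Δ I) (i : ℕ) : Prop := d.partner i = none

/-- The set of surviving bullets. -/
def surv (d : Dynamics v Δ I) : Set ℕ := {i | i ∈ I ∧ d.survives i}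

/-- `d.annihilates j i` : the later bullet `j` catches up to and annihilates `i`. -/
def annihilates (d : Dynamics v Δ I) (j i : ℕ) : Prop := i < j ∧ d.partner i = some j

end Dynamics

/-- The probabilistic bullet process on the probability space `(Ω, P)`: i.i.d. velocities with
law `μ` and i.i.d. delays with law `ν` (all independent, and all strictly positive), together
with a choice of dynamics for every admissible deterministic configuration and every index set
of bullets. -/
structure Setup (Ω : Type) [MeasurableSpace Ω] (P : Measure Ω) (μ ν : Measure ℝ) where
  V : ℕ → Ω → ℝ
  D : ℕ → Ω → ℝ
  Vpos : ∀ i ω, 0 < V i ω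
  Dpos : ∀ i ω, 0 < D i ω
  measV : ∀ i, Measurable (V i)
  measD : ∀ i, Measurable (D i)
  lawV : ∀ i, P.map (V i) = μ
  lawD : ∀ i, P.map (D i) = ν
  indep : iIndepFun (Sum.elim V D) P
  dyn : ∀ (v Δ : ℕ → ℝ), 0 ≤ v 0 → (∀ i, i ≠ 0 → 0 < v i) → (∀ i, 0 < Δ i) →
    ∀ (I : Set ℕ), Dynamics v Δ I

namespace Setup

variable {Ω : Type} [MeasurableSpace Ω] {P : Measure Ω} {μ ν : Measure ℝ}
variable (B : Setup Ω P μ ν)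

/-- The realized sequence of velocities. -/
def vseq (ω : Ω) : ℕ → ℝ := fun i => B.V i ω

/-- The realized sequence of delays. -/
def dseq (ω : Ω) : ℕ → ℝ := fun i => B.D i ω

/-- Validity of the pair `(μ, ν)`: almost surely there are no triple collisions. -/
def valid : Prop := ∀ᵐ ω ∂P, NoTriple (B.vseq ω) (B.dseq ω)

/-- The dynamics of the bullet process on the bullets indexed by `I`. -/
def dynOn (ω : Ω) (I : Set ℕ) : Dynamics (B.vseq ω) (B.dseq ω) I :=
  B.dyn _ _ (le_of_lt (B.Vpos 0 ω)) (fun i _ => B.Vpos i ω) (fun i => B.Dpos i ω) I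

/-- `S`, the survivor set of the full process. -/
def survSet (ω : Ω) : Set ℕ := (B.dynOn ω Set.univ).surv

/-- `S_n`, the survivor set of the truncated process on bullets `b_0, …, b_n`. -/
def truncS (ω : Ω) (n : ℕ) : Set ℕ := (B.dynOn ω (Set.Iic n)).surv

/-- `b_n` is a potential survivor: it survives in the process on `b_0, …, b_n`. -/
def potSurv (ω : Ω) (n : ℕ) : Prop := (B.dynOn ω (Set.Iic n)).survives n

/-- The dynamics when the velocity of `b_0` is fixed to `v` (junk value `max v 0` if `v < 0`). -/
def dyn0 (vel : ℝ) (ω : Ω) (I : Set ℕ) :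
    Dynamics (Function.update (B.vseq ω) 0 (max vel 0)) (B.dseq ω) I :=
  B.dyn _ _ (by simp) (fun i hi => by
      rw [Function.update_of_ne hi]; exact B.Vpos i ω)
    (fun i => B.Dpos i ω) I

/-- The event that the first bullet, with velocity fixed to `v`, survives forever. -/
def survEvent (vel : ℝ) : Set Ω := {ω | (B.dyn0 vel ω Set.univ).survives 0}

/-- `θ(v)`: the probability that the first bullet survives when its velocity is fixed to `v`. -/
def theta (vel : ℝ) : ℝ := (P (B.survEvent vel)).toReal

/-- The critical velocity `v_c = inf {v ≥ 0 : θ(v) > 0}` (equal to `⊤` if no speed is fast). -/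
def vc : EReal :=
  sInf {x : EReal | ∃ vel : ℝ, 0 ≤ vel ∧ 0 < B.theta vel ∧ x = (vel : EReal)}

end Setup

end BulletProcess

/-!
Run the process with speeds `c₁ < c₂` of `b_0` on the same realization. If `b_0` survives at
speed `c₁` but is annihilated at time `T` by `b_j` at speed `c₂`, then `b_j` crosses the slower
trajectory of `b_0` before `T`, so at speed `c₁` it is annihilated earlier, by some `b_k`.
Following the alternating path of partners in the two processes (the partner of `b_k` at speed
`c₂`, the partner of that one at speed `c₁`, …), the death times strictly decrease, because
there are no triple collisions. All these bullets are fired before `T`, and there are only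
finitely many such bullets, since the i.i.d. positive delays make the firing times diverge almost
surely (second Borel–Cantelli lemma). Hence the survival event at speed `c₁` is almost surely
contained in the one at speed `c₂`.
-/

namespace BulletProcess

section Deterministic

variable {w Δ : ℕ → ℝ}

lemma fireTime_zero (Δ : ℕ → ℝ) : fireTime Δ 0 = 0 := by simp [fireTime]

lemma fireTime_mono (hΔ : ∀ i, 0 ≤ Δ i) : Monotone (fireTime Δ) := fun _ _ hij =>
  Finset.sum_le_sum_of_subset_of_nonneg (Finset.Icc_subset_Icc_right hij) fun k _ _ => hΔ k

lemma fireTime_pos (hΔ : ∀ i, 0 < Δ i) {j : ℕ} (hj : j ≠ 0) : 0 < fireTime Δ j :=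
  Finset.sum_pos (fun k _ => hΔ k) (Finset.nonempty_Icc.2 (Nat.one_le_iff_ne_zero.2 hj))

lemma fireTime_eq_sum_range (Δ : ℕ → ℝ) (n : ℕ) :
    fireTime Δ n = ∑ i ∈ Finset.range n, Δ (i + 1) := by
  induction n with
  | zero => exact fireTime_zero Δ
  | succ n ih =>
    rw [Finset.sum_range_succ, ← ih, fireTime, fireTime, Finset.sum_Icc_succ_top (by omega)]

lemma tendsto_fireTime_atTop (hΔ : ∀ i, 0 ≤ Δ i) {ε : ℝ} (hε : 0 < ε)
    (hfreq : ∃ᶠ n in atTop, ε < Δ (n + 1)) : Tendsto (fireTime Δ) atTop atTop := by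
  have hns : ¬Summable fun n => Δ (n + 1) := fun hs =>
    hfreq ((hs.tendsto_atTop_zero.eventually (gt_mem_nhds hε)).mono fun _ h => h.not_gt)
  simpa only [← fireTime_eq_sum_range] using
    (not_summable_iff_tendsto_nat_atTop_of_nonneg fun n => hΔ (n + 1)).1 hns

lemma finite_setOf_fireTime_le (hdiv : Tendsto (fireTime Δ) atTop atTop) (T : ℝ) :
    {i | fireTime Δ i ≤ T}.Finite := by
  simpa only [not_lt, ← Nat.cofinite_eq_atTop, eventually_cofinite] using
    hdiv.eventually_gt_atTop T

lemma pos_update_ne {c : ℝ} {i : ℕ} (hi : i ≠ 0) (t : ℝ) :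
    pos (Function.update w 0 c) Δ i t = pos w Δ i t := by
  simp [pos, Function.update_of_ne hi]

lemma pos_update_zero (c t : ℝ) : pos (Function.update w 0 c) Δ 0 t = c * t := by
  simp [pos, fireTime_zero]

lemma exists_crossing_before {c₁ c₂ r t T : ℝ} (h0 : 0 ≤ c₁) (h12 : c₁ < c₂) (h2r : c₂ < r)
    (ht : 0 < t) (htT : t ≤ T) (hmeet : c₂ * T = r * (T - t)) :
    ∃ t', t ≤ t' ∧ t' < T ∧ c₁ * t' = r * (t' - t) := by
  have hr : 0 < r - c₁ := by linarith
  refine ⟨r * t / (r - c₁), ?_, ?_, ?_⟩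
  · rw [le_div_iff₀ hr]; nlinarith
  · rw [div_lt_iff₀ hr]; nlinarith
  · field_simp; ring

namespace Dynamics

variable {v : ℕ → ℝ} {I : Set ℕ} (d : Dynamics v Δ I)

lemma ne_of_partner_eq {i j : ℕ} (hi : i ∈ I) (h : d.partner i = some j) : i ≠ j := by
  rintro rfl; exact d.partner_ne i hi h

lemma meet_at_deathTime (hΔ : ∀ i, 0 ≤ Δ i) {i j : ℕ} (hi : i ∈ I) (h : d.partner i = some j) :
    pos v Δ i (d.deathTime i) = pos v Δ j (d.deathTime i) ∧
      fireTime Δ i ≤ d.deathTime i ∧ fireTime Δ j ≤ d.deathTime i := by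
  have hj := d.partner_mem i j hi h
  rcases (d.ne_of_partner_eq hi h).lt_or_gt with hij | hji
  · obtain ⟨-, hfj, hpos⟩ := d.collide i j hi hij h
    exact ⟨hpos, (fireTime_mono hΔ hij.le).trans hfj, hfj⟩
  · obtain ⟨-, hfi, hpos⟩ := d.collide j i hj hji ((d.partner_symm i j hi hj).1 h)
    rw [d.death_symm i j hi h] at hfi hpos
    exact ⟨hpos.symm, hfi, (fireTime_mono hΔ hji.le).trans hfi⟩

lemma exists_partner_of_meet {a b : ℕ} {t : ℝ} (ha : a ∈ I) (hb : b ∈ I) (hab : a ≠ b)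
    (hfa : fireTime Δ a ≤ t) (hfb : fireTime Δ b ≤ t)
    (halive : d.partner a = none ∨ t < d.deathTime a) (hmeet : pos v Δ a t = pos v Δ b t) :
    ∃ c, d.partner b = some c ∧ d.deathTime b ≤ t := by
  rcases hc : d.partner b with _ | c
  · exact absurd hmeet (d.no_crossing a b ha hb hab t hfa hfb halive (Or.inl hc))
  · refine ⟨c, rfl, le_of_not_gt fun hlt => ?_⟩
    exact d.no_crossing a b ha hb hab t hfa hfb halive (Or.inr hlt) hmeet

end Dynamics

variable {c₁ c₂ : ℝ}

def DiesEarlier (X : Dynamics (Function.update w 0 c₁) Δ univ)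
    (Y : Dynamics (Function.update w 0 c₂) Δ univ) (T : ℝ) (a : ℕ) : Prop :=
  a ≠ 0 ∧ (∃ b, b ≠ 0 ∧ X.partner a = some b) ∧ X.deathTime a < Y.deathTime a ∧
    Y.deathTime a ≤ T

variable {X : Dynamics (Function.update w 0 c₁) Δ univ}
  {Y : Dynamics (Function.update w 0 c₂) Δ univ} {T : ℝ}

lemma DiesEarlier.fireTime_le (hΔ : ∀ i, 0 ≤ Δ i) {a : ℕ} (h : DiesEarlier X Y T a) :
    fireTime Δ a ≤ T := by
  obtain ⟨-, ⟨b, -, hab⟩, hXY, hYT⟩ := h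
  exact (X.meet_at_deathTime hΔ trivial hab).2.1.trans (hXY.le.trans hYT)

/-- The alternating-path step: the `X`-partner `b` of `a` meets `a` while `a` is still alive
in `Y`, so `b` dies in `Y` even earlier; without triple collisions, strictly earlier. -/
lemma DiesEarlier.step (hΔ : ∀ i, 0 ≤ Δ i) (hNT : NoTriple w Δ)
    (hY0 : Y.partner 0 = none ∨ T ≤ Y.deathTime 0) {a : ℕ} (h : DiesEarlier X Y T a) :
    ∃ b, DiesEarlier Y X T b ∧ Y.deathTime b < X.deathTime a := by
  obtain ⟨ha, ⟨b, hb, hab⟩, hXY, hYT⟩ := h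
  have hane := X.ne_of_partner_eq trivial hab
  obtain ⟨hmeetX, hfa, hfb⟩ := X.meet_at_deathTime hΔ trivial hab
  set V := X.deathTime a
  have hmeet : pos w Δ a V = pos w Δ b V := by
    rwa [pos_update_ne ha, pos_update_ne hb] at hmeetX
  obtain ⟨c, hbc, hWV⟩ := Y.exists_partner_of_meet trivial trivial hane hfa hfb (Or.inr hXY)
    (by rwa [pos_update_ne ha, pos_update_ne hb])
  have hc : c ≠ 0 := by
    rintro rfl
    have hY0b : Y.deathTime 0 = Y.deathTime b := Y.death_symm b 0 trivial hbc
    rcases hY0 with hnone | hT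
    · exact Option.some_ne_none b ((Y.partner_symm b 0 trivial trivial).1 hbc ▸ hnone)
    · linarith
  have hWV' : Y.deathTime b < V := by
    refine hWV.lt_of_ne fun hW => ?_
    obtain ⟨hmeetY, -, hfc⟩ := Y.meet_at_deathTime hΔ trivial hbc
    rw [pos_update_ne hb, pos_update_ne hc, hW] at hmeetY
    have hac : a ≠ c := by
      rintro rfl
      have := Y.death_symm b a trivial hbc
      linarith
    exact hNT V a b c hane (Y.ne_of_partner_eq trivial hbc) hac hfa hfb (hW ▸ hfc)
      ⟨hmeet, hmeetY⟩
  refine ⟨b, ⟨hb, ⟨c, hc, hbc⟩, ?_, ?_⟩, hWV'⟩ <;> rw [X.death_symm a b trivial hab]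
  · exact hWV'
  · exact hXY.le.trans hYT

/-- `b_j` crosses the slower trajectory of `b_0` before `T`, so it must die earlier in `X`. -/
lemma diesEarlier_of_partner_zero (hΔ : ∀ i, 0 < Δ i) (h0 : 0 ≤ c₁) (h12 : c₁ < c₂)
    (h1 : X.survives 0) {j : ℕ} (h2 : Y.partner 0 = some j) :
    DiesEarlier X Y (Y.deathTime 0) j := by
  have hj : j ≠ 0 := (Y.ne_of_partner_eq trivial h2).symm
  obtain ⟨hmeet, -, hfj⟩ := Y.meet_at_deathTime (fun i => (hΔ i).le) trivial h2
  obtain ⟨hv, -⟩ := Y.collide 0 j trivial (Nat.pos_of_ne_zero hj) h2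
  rw [Function.update_self, Function.update_of_ne hj] at hv
  rw [pos_update_zero, pos_update_ne hj] at hmeet
  obtain ⟨t', hjt', ht'T, hcross⟩ :=
    exists_crossing_before h0 h12 hv (fireTime_pos hΔ hj) hfj hmeet
  obtain ⟨k, hjk, hdj⟩ := X.exists_partner_of_meet trivial trivial hj.symm
    (by rw [fireTime_zero]; exact (fireTime_pos hΔ hj).le.trans hjt') hjt' (Or.inl h1)
    (by rw [pos_update_zero, pos_update_ne hj]; exact hcross)
  have hk : k ≠ 0 := by
    rintro rfl
    exact Option.some_ne_none j ((X.partner_symm j 0 trivial trivial).1 hjk ▸ h1)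
  exact ⟨hj, ⟨k, hk, hjk⟩, by rw [Y.death_symm 0 j trivial h2]; linarith,
    (Y.death_symm 0 j trivial h2).le⟩

/-- A bullet of `{a | DiesEarlier X Y T a}` with the earliest death time in `X` would contradict
two steps of the alternating path; the set is finite since all its bullets are fired before `T`. -/
theorem survives_zero_of_lt (hΔ : ∀ i, 0 < Δ i) (hNT : NoTriple w Δ)
    (hdiv : Tendsto (fireTime Δ) atTop atTop) (h0 : 0 ≤ c₁) (h12 : c₁ < c₂)
    (h1 : X.survives 0) : Y.survives 0 := by
  rcases h2 : Y.partner 0 with _ | j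
  · exact h2
  set T := Y.deathTime 0
  have hΔ' : ∀ i, 0 ≤ Δ i := fun i => (hΔ i).le
  have hne : {a | DiesEarlier X Y T a}.Nonempty :=
    ⟨j, diesEarlier_of_partner_zero hΔ h0 h12 h1 h2⟩
  have hfin : {a | DiesEarlier X Y T a}.Finite :=
    (finite_setOf_fireTime_le hdiv T).subset fun a ha => DiesEarlier.fireTime_le hΔ' ha
  obtain ⟨a, ha, hmin⟩ := Set.exists_min_image _ X.deathTime hfin hne
  obtain ⟨b, hb, hba⟩ := DiesEarlier.step hΔ' hNT (Or.inr le_rfl) ha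
  obtain ⟨e, he, heb⟩ := hb.step hΔ' hNT (Or.inl h1)
  exact ((hmin e he).not_gt (heb.trans hba)).elim

end Deterministic

lemma exists_pos_measure_Ioi_ne_zero {ν : Measure ℝ} (h : ν (Ioi 0) ≠ 0) :
    ∃ ε, 0 < ε ∧ ν (Ioi ε) ≠ 0 := by
  by_contra! hν
  refine h (measure_mono_null (fun x hx => ?_)
    (measure_iUnion_null fun n : ℕ => hν (1 / (n + 1)) Nat.one_div_pos_of_nat))
  obtain ⟨n, hn⟩ := exists_nat_one_div_lt (mem_Ioi.1 hx)
  exact mem_iUnion.2 ⟨n, hn⟩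

namespace Setup

variable {Ω : Type} [MeasurableSpace Ω] {P : Measure Ω} {μ ν : Measure ℝ} (B : Setup Ω P μ ν)

lemma iIndepSet_preimage_delay {s : Set ℝ} (hs : MeasurableSet s) :
    iIndepSet (fun n => B.D (n + 1) ⁻¹' s) P := by
  have hD : iIndepFun (fun n => B.D (n + 1)) P :=
    B.indep.precomp (g := fun n => Sum.inr (n + 1)) (Sum.inr_injective.comp (add_left_injective 1))
  rw [iIndepSet_iff_meas_biInter fun n => B.measD _ hs]
  exact fun t => hD.measure_inter_preimage_eq_mul t fun _ _ => hs

lemma ae_frequently_lt_delay {ε : ℝ} (hε : ν (Ioi ε) ≠ 0) :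
    ∀ᵐ ω ∂P, ∃ᶠ n in atTop, ε < B.D (n + 1) ω := by
  have := B.indep.isProbabilityMeasure
  have hlaw : ∀ n, P (B.D (n + 1) ⁻¹' Ioi ε) = ν (Ioi ε) := fun n => by
    rw [← Measure.map_apply (B.measD _) measurableSet_Ioi, B.lawD]
  have hmeas : ∀ n, MeasurableSet (B.D (n + 1) ⁻¹' Ioi ε) := fun n => B.measD _ measurableSet_Ioi
  have hlimsup := measure_limsup_eq_one hmeas (B.iIndepSet_preimage_delay measurableSet_Ioi)
    (by simpa only [hlaw] using ENNReal.tsum_const_eq_top_of_ne_zero hε)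
  rw [← measure_univ (μ := P),
    ← ae_mem_iff_measure_eq (MeasurableSet.measurableSet_limsup hmeas).nullMeasurableSet]
    at hlimsup
  filter_upwards [hlimsup] with ω hω
  exact mem_limsup_iff_frequently_mem.1 hω

lemma ae_tendsto_fireTime : ∀ᵐ ω ∂P, Tendsto (fireTime (B.dseq ω)) atTop atTop := by
  have := B.indep.isProbabilityMeasure
  have hν : ν (Ioi 0) ≠ 0 := by
    rw [← B.lawD 0, Measure.map_apply (B.measD 0) measurableSet_Ioi,
      preimage_eq_univ_iff.2 fun x ⟨ω, hω⟩ => hω ▸ B.Dpos 0 ω, measure_univ]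
    exact one_ne_zero
  obtain ⟨ε, hε, hνε⟩ := exists_pos_measure_Ioi_ne_zero hν
  filter_upwards [B.ae_frequently_lt_delay hνε] with ω hω
  exact tendsto_fireTime_atTop (fun i => (B.Dpos i ω).le) hε hω

end Setup

variable {Ω : Type} [MeasurableSpace Ω] {P : MeasureTheory.Measure Ω}
  [MeasureTheory.IsProbabilityMeasure P] {μ ν : MeasureTheory.Measure ℝ}
  [MeasureTheory.IsProbabilityMeasure μ] [MeasureTheory.IsProbabilityMeasure ν]

/-- The survival probability `θ(v)` is non-decreasing in `v` on `[0, ∞)`. -/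
theorem theta_monotone (B : Setup Ω P μ ν) (hvalid : B.valid) :
    MonotoneOn B.theta (Set.Ici 0) := by
  intro a ha b hb hab
  rcases hab.eq_or_lt with rfl | hlt
  · exact le_rfl
  have hsub : B.survEvent a ≤ᵐ[P] B.survEvent b := by
    filter_upwards [hvalid, B.ae_tendsto_fireTime] with ω hNT hdiv hω
    exact survives_zero_of_lt (fun i => B.Dpos i ω) hNT hdiv (le_max_right a 0)
      (by rwa [max_eq_left ha, max_eq_left hb]) hω
  exact ENNReal.toReal_mono (measure_ne_top P _) (measure_mono_ae hsub)

end BulletProcess
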